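/- arXiv:math/0308186 — 2 statements merged into one kernel-verified Lean document; each statement's English description precedes it below -/
import Mathlib

section
/- Let i, k ∈ ℝ² be nonzero vectors with det(i,k) < 0 (so that i, k are in clockwise position around the origin), let j = a·i + b·k with real a, b > 0 (so j lies in the relative interior of the cone spanned by i and k), and let ℓ = −c·i − d·k with real c, d > 0 (so ℓ lies in the relative interior of the cone spanned by −i and −k). If [i j k] > 0, then [i ℓ j] > 0 and [j ℓ k] > 0. -/
/-- For `v = (x, y) ∈ ℝ²`, `u · v^⊥ = det(u, v)` where `v^⊥ = (y, -x)`. -/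
noncomputable def dperp (u v : ℝ × ℝ) : ℝ := u.1 * v.2 - u.2 * v.1

/-- `[p q r]`: the determinant of the 3×3 matrix with columns `(pₓ,p_y,1)`, `(qₓ,q_y,1)`,
`(rₓ,r_y,1)` (twice the signed area of the triangle `p q r`). -/
noncomputable def tdet (p q r : ℝ × ℝ) : ℝ :=
  p.1 * (q.2 - r.2) - q.1 * (p.2 - r.2) + r.1 * (p.2 - q.2)

/-- If `i, k ∈ ℝ²` are nonzero with `det(i,k) < 0`, `j = a·i + b·k` with `a, b > 0`,
`ℓ = -c·i - d·k` with `c, d > 0`, and `[i j k] > 0`, then `[i ℓ j] > 0` and `[j ℓ k] > 0`. -/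
theorem tdet_signs (i k j l : ℝ × ℝ) (hi : i ≠ 0) (hk : k ≠ 0)
    (hik : dperp i k < 0)
    (a b : ℝ) (ha : 0 < a) (hb : 0 < b) (hj : j = a • i + b • k)
    (c d : ℝ) (hc : 0 < c) (hd : 0 < d) (hl : l = -(c • i) - d • k)
    (hijk : 0 < tdet i j k) :
    0 < tdet i l j ∧ 0 < tdet j l k := by
  subst hj hl
  set D := dperp i k with hD
  simp only [dperp, tdet, Prod.smul_fst, Prod.smul_snd, Prod.fst_add, Prod.snd_add,
    Prod.fst_sub, Prod.snd_sub, Prod.fst_neg, Prod.snd_neg, smul_eq_mul] at *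
  have h1 : 0 < (a + b - 1) * D := by nlinarith [hijk]
  have hab : a + b < 1 := by nlinarith
  constructor
  · have : tdet i (-(c • i) - d • k) (a • i + b • k) = (d * a - c * b - d - b) * D := by
      simp [tdet, dperp, hD]; ring
    nlinarith [this, mul_pos hd (sub_pos.mpr (show a < 1 by nlinarith)),
      mul_pos hc hb]
  · have : tdet (a • i + b • k) (-(c • i) - d • k) k = (c * b - c - d * a - a) * D := by
      simp [tdet, dperp, hD]; ring
    nlinarith [this, mul_pos hc (sub_pos.mpr (show b < 1 by nlinarith)),
      mul_pos hd ha]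
end

section
/- Let i, j, k, ℓ ∈ ℝ² with [i j k] ≠ 0 and [i j ℓ] ≠ 0, and let h_i, h_j, h_k, h_ℓ ∈ ℝ. Then z(i,h_i; j,h_j; k,h_k) − z(i,h_i; j,h_j; ℓ,h_ℓ) = ((i·j^⊥)·[j k ℓ]/([i j k]·[i j ℓ]))·h_i + ((i·j^⊥)·[k i ℓ]/([i j k]·[i j ℓ]))·h_j + ((i·j^⊥)/[i j k])·h_k − ((i·j^⊥)/[i j ℓ])·h_ℓ. -/
/-- The intersection height
`z(u,h_u; v,h_v; w,h_w) = ((u·v^⊥)·h_w + (w·u^⊥)·h_v + (v·w^⊥)·h_u) / [u v w]`. -/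
noncomputable def iheight (u v w : ℝ × ℝ) (hu hv hw : ℝ) : ℝ :=
  (dperp u v * hw + dperp w u * hv + dperp v w * hu) / tdet u v w

/-- For `i, j, k, ℓ ∈ ℝ²` with `[i j k] ≠ 0` and `[i j ℓ] ≠ 0` and heights
`h_i, h_j, h_k, h_ℓ`, the difference of intersection heights satisfies
`z(i,h_i; j,h_j; k,h_k) − z(i,h_i; j,h_j; ℓ,h_ℓ)
  = ((i·j^⊥)·[j k ℓ]/([i j k]·[i j ℓ]))·h_i + ((i·j^⊥)·[k i ℓ]/([i j k]·[i j ℓ]))·h_j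
    + ((i·j^⊥)/[i j k])·h_k − ((i·j^⊥)/[i j ℓ])·h_ℓ`. -/
theorem iheight_diff (i j k l : ℝ × ℝ) (hijk : tdet i j k ≠ 0) (hijl : tdet i j l ≠ 0)
    (hi hj hk hl : ℝ) :
    iheight i j k hi hj hk - iheight i j l hi hj hl =
      (dperp i j * tdet j k l / (tdet i j k * tdet i j l)) * hi +
      (dperp i j * tdet k i l / (tdet i j k * tdet i j l)) * hj +
      (dperp i j / tdet i j k) * hk -
      (dperp i j / tdet i j l) * hl := by
  have e1 : dperp j k * tdet i j l - dperp j l * tdet i j k = dperp i j * tdet j k l := by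
    simp only [dperp, tdet]; ring
  have e2 : dperp k i * tdet i j l - dperp l i * tdet i j k = dperp i j * tdet k i l := by
    simp only [dperp, tdet]; ring
  have hr : (dperp i j * tdet j k l / (tdet i j k * tdet i j l)) * hi +
      (dperp i j * tdet k i l / (tdet i j k * tdet i j l)) * hj +
      (dperp i j / tdet i j k) * hk -
      (dperp i j / tdet i j l) * hl =
      (dperp i j * tdet j k l * hi + dperp i j * tdet k i l * hj +
        dperp i j * tdet i j l * hk - dperp i j * tdet i j k * hl) /
        (tdet i j k * tdet i j l) := by
    field_simp
  rw [hr, iheight, iheight, div_sub_div _ _ hijk hijl]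
  congr 1
  linear_combination hi * e1 + hj * e2
end
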